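/- Tightness of the downward-closure bound: for every k ≥ 1, over the alphabet Σ_k = {a_1,…,a_k}, the language D_k = {x ∈ Σ_k^+ | for all positions i > 1, x[i] ≠ x[1]} (all nonempty words whose first letter does not reappear) satisfies nN(D_k) = nD(D_k) = k + 1 and nD(↓D_k) = 2^k. (Note ↓D_k is the set of all words x over Σ_k such that the suffix x[2..] obtained by removing the first letter does not use all letters of Σ_k.) -/

import Mathlib

/-- An accepting run of an NFA on a word `w`: a sequence of `|w|+1` states starting
in an initial state, ending in an accepting state, and following the transitions. -/
def NFA.IsAcceptingRun {α σ : Type*} (M : NFA α σ) (w : List α)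
    (r : Fin (w.length + 1) → σ) : Prop :=
  r 0 ∈ M.start ∧ r (Fin.last w.length) ∈ M.accept ∧
    ∀ i : Fin w.length, r i.succ ∈ M.step (r i.castSucc) (w.get i)

/-- An NFA is unambiguous (a UFA) if every word has at most one accepting run. -/
def NFA.Unambiguous {α σ : Type*} (M : NFA α σ) : Prop :=
  ∀ (w : List α) (r₁ r₂ : Fin (w.length + 1) → σ),
    M.IsAcceptingRun w r₁ → M.IsAcceptingRun w r₂ → r₁ = r₂

/-- A deterministic NFA (a DFA with a possibly partial transition function):
exactly one initial state and at most one successor per state and letter. -/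
def NFA.Deterministic {α σ : Type*} (M : NFA α σ) : Prop :=
  (∃ q₀, M.start = {q₀}) ∧ ∀ q a, (M.step q a).Subsingleton

/-- Minimal number of states of an NFA recognizing `L` (`nN(L)`). -/
noncomputable def nN {α : Type} (L : Language α) : ℕ :=
  sInf {n | ∃ (σ : Type) (inst : Fintype σ) (M : NFA α σ),
    @Fintype.card σ inst = n ∧ M.accepts = L}

/-- Minimal number of states of a DFA (partial transition function allowed)
recognizing `L` (`nD(L)`). -/
noncomputable def nD {α : Type} (L : Language α) : ℕ :=
  sInf {n | ∃ (σ : Type) (inst : Fintype σ) (M : NFA α σ),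
    M.Deterministic ∧ @Fintype.card σ inst = n ∧ M.accepts = L}

/-- Minimal number of states of an unambiguous NFA recognizing `L` (`nU(L)`). -/
noncomputable def nU {α : Type} (L : Language α) : ℕ :=
  sInf {n | ∃ (σ : Type) (inst : Fintype σ) (M : NFA α σ),
    M.Unambiguous ∧ @Fintype.card σ inst = n ∧ M.accepts = L}

/-- Upward closure: all superwords (w.r.t. the scattered-subword ordering
`List.Sublist`) of words of `L`. -/
def upClosure {α : Type} (L : Language α) : Language α := {x | ∃ y ∈ L, y.Sublist x}

/-- Downward closure: all subwords of words of `L`. -/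
def downClosure {α : Type} (L : Language α) : Language α := {x | ∃ y ∈ L, x.Sublist y}

/-- Upward interior: words all of whose superwords are in `L`. -/
def upInterior {α : Type} (L : Language α) : Language α := {x | ∀ y, x.Sublist y → y ∈ L}

/-- Downward interior: words all of whose subwords are in `L`. -/
def downInterior {α : Type} (L : Language α) : Language α := {x | ∀ y, y.Sublist x → y ∈ L}

/-
Reading the first letter and rejecting on its return is a DFA with `|Σ| + 1` states for `D`;
the pairs `(ε, c·(Σ∖c))` and `(a, Σ∖a)` form a fooling set of the same size, so no NFA is
smaller. A word lies in `↓D` iff its tail misses some letter, so a DFA for `↓D` only has to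
remember the set of letters of the tail: the proper subsets plus the initial state give `2^|Σ|`
states. The words `ε` and `c·S` (for `S ≠ Σ`) reaching them are pairwise separated by a suffix
listing all letters but one, which gives the matching lower bound.
-/

namespace NFA

variable {α σ : Type*} (M : NFA α σ)

theorem mem_acceptsFrom_iff_exists_singleton {S : Set σ} {x : List α} :
    x ∈ M.acceptsFrom S ↔ ∃ s ∈ S, x ∈ M.acceptsFrom {s} := by
  simp only [mem_acceptsFrom, mem_evalFrom_iff_exists (S := S)]
  grind

theorem cons_mem_acceptsFrom_singleton {s : σ} {a : α} {x : List α} :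
    a :: x ∈ M.acceptsFrom {s} ↔ ∃ t ∈ M.step s a, x ∈ M.acceptsFrom {t} := by
  rw [cons_mem_acceptsFrom, stepSet_singleton, mem_acceptsFrom_iff_exists_singleton]

theorem append_mem_accepts_iff {x y : List α} :
    x ++ y ∈ M.accepts ↔ ∃ q ∈ M.eval x, y ∈ M.acceptsFrom {q} := by
  rw [accepts_eq_acceptsFrom_start, append_mem_acceptsFrom,
    mem_acceptsFrom_iff_exists_singleton]
  rfl

theorem card_le_of_isFoolingSet [Fintype σ] {ι : Type*} [Fintype ι] (x y : ι → List α)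
    (hdiag : ∀ i, x i ++ y i ∈ M.accepts)
    (hcross : Pairwise fun i j => x i ++ y j ∉ M.accepts ∨ x j ++ y i ∉ M.accepts) :
    Fintype.card ι ≤ Fintype.card σ := by
  choose q hq hqy using fun i => (M.append_mem_accepts_iff).1 (hdiag i)
  have hmix : ∀ {i j}, q i = q j → x i ++ y j ∈ M.accepts := fun {i j} hij =>
    M.append_mem_accepts_iff.2 ⟨q i, hq i, hij ▸ hqy j⟩
  refine Fintype.card_le_of_injective q fun i j hij => ?_
  by_contra hne
  rcases hcross hne with h | h
  exacts [h (hmix hij), h (hmix hij.symm)]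

variable {M}

theorem Deterministic.evalFrom_subsingleton (hM : M.Deterministic) {S : Set σ}
    (hS : S.Subsingleton) (x : List α) : (M.evalFrom S x).Subsingleton := by
  induction x generalizing S with
  | nil => exact hS
  | cons a x ih =>
    refine ih fun p hp p' hp' => ?_
    obtain ⟨t, ht, hpt⟩ := mem_stepSet.1 hp
    obtain ⟨t', ht', hpt'⟩ := mem_stepSet.1 hp'
    obtain rfl := hS ht ht'
    exact hM.2 t a hpt hpt'

theorem Deterministic.eval_subsingleton (hM : M.Deterministic) (x : List α) :
    (M.eval x).Subsingleton := by
  obtain ⟨q₀, h₀⟩ := hM.1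
  exact hM.evalFrom_subsingleton (h₀ ▸ Set.subsingleton_singleton) x

theorem Deterministic.card_le_of_pairwise_distinguishable [Fintype σ] (hM : M.Deterministic)
    {ι : Type*} [Fintype ι] (u : ι → List α) (hlive : ∀ i, (M.eval (u i)).Nonempty)
    (hdist : Pairwise fun i j => ∃ v, ¬(u i ++ v ∈ M.accepts ↔ u j ++ v ∈ M.accepts)) :
    Fintype.card ι ≤ Fintype.card σ := by
  choose q hq using hlive
  have heval : ∀ i, M.eval (u i) = {q i} := fun i =>
    (hM.eval_subsingleton (u i)).eq_singleton_of_mem (hq i)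
  refine Fintype.card_le_of_injective q fun i j hij => ?_
  by_contra hne
  obtain ⟨v, hv⟩ := hdist hne
  simp only [append_mem_accepts_iff, heval, Set.mem_singleton_iff, exists_eq_left, hij,
    iff_self, not_true_eq_false] at hv

end NFA

section StateComplexity

variable {α σ : Type} [Fintype σ] {L : Language α}

theorem nN_eq (M : NFA α σ) (hM : M.accepts = L)
    (hmin : ∀ (τ : Type) [Fintype τ] (N : NFA α τ), N.accepts = L →
      Fintype.card σ ≤ Fintype.card τ) :
    nN L = Fintype.card σ :=
  IsLeast.csInf_eq ⟨⟨σ, _, M, rfl, hM⟩, by rintro n ⟨τ, _, N, rfl, hN⟩; exact hmin τ N hN⟩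

theorem nD_eq (M : NFA α σ) (hdet : M.Deterministic) (hM : M.accepts = L)
    (hmin : ∀ (τ : Type) [Fintype τ] (N : NFA α τ), N.Deterministic → N.accepts = L →
      Fintype.card σ ≤ Fintype.card τ) :
    nD L = Fintype.card σ :=
  IsLeast.csInf_eq ⟨⟨σ, _, M, hdet, rfl, hM⟩,
    by rintro n ⟨τ, _, N, hN, rfl, hNL⟩; exact hmin τ N hN hNL⟩

end StateComplexity

section UniqueFirstLetter

variable {α : Type}

def uniqueFirstLetter (α : Type) : Language α := {x | ∃ a w, x = a :: w ∧ a ∉ w}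

@[simp]
theorem nil_notMem_uniqueFirstLetter : [] ∉ uniqueFirstLetter α := by
  rintro ⟨a, w, h, -⟩
  cases h

@[simp]
theorem cons_mem_uniqueFirstLetter {a : α} {w : List α} :
    a :: w ∈ uniqueFirstLetter α ↔ a ∉ w := by
  constructor
  · rintro ⟨b, v, h, hb⟩
    obtain ⟨rfl, rfl⟩ := List.cons.inj h
    exact hb
  · exact fun h => ⟨a, w, rfl, h⟩

theorem mem_downClosure_uniqueFirstLetter [Nonempty α] {x : List α} :
    x ∈ downClosure (uniqueFirstLetter α) ↔ ∃ b, b ∉ x.tail := by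
  constructor
  · rintro ⟨_ | ⟨a, w⟩, hy, hxy⟩
    · exact absurd hy nil_notMem_uniqueFirstLetter
    · exact ⟨a, fun ha => cons_mem_uniqueFirstLetter.1 hy (hxy.tail.subset ha)⟩
  · rintro ⟨b, hb⟩
    cases x with
    | nil => exact ⟨[b], by simp, List.nil_sublist _⟩
    | cons c t =>
      by_cases hbc : b = c
      · exact ⟨c :: t, by simpa [← hbc] using hb, List.Sublist.refl _⟩
      · exact ⟨b :: c :: t, by simpa [hbc] using hb, List.sublist_cons_self _ _⟩

end UniqueFirstLetter

section UniqueFirstLetterDFA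

variable (α : Type)

@[simps]
def uniqueFirstLetterDFA : NFA α (Option α) where
  step
    | none, a => {some a}
    | some b, a => {p | p = some b ∧ a ≠ b}
  start := {none}
  accept := {p | p.isSome}

theorem uniqueFirstLetterDFA_deterministic : (uniqueFirstLetterDFA α).Deterministic := by
  refine ⟨⟨none, rfl⟩, fun q a => ?_⟩
  cases q with
  | none => exact Set.subsingleton_singleton
  | some b => exact Set.subsingleton_singleton.anti fun p hp => hp.1

variable {α}

theorem mem_acceptsFrom_uniqueFirstLetterDFA_some {b : α} {t : List α} :
    t ∈ (uniqueFirstLetterDFA α).acceptsFrom {some b} ↔ b ∉ t := by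
  induction t with
  | nil => simp
  | cons c t ih =>
    rw [NFA.cons_mem_acceptsFrom_singleton]
    simp [ih, eq_comm (a := c)]

theorem accepts_uniqueFirstLetterDFA :
    (uniqueFirstLetterDFA α).accepts = uniqueFirstLetter α := by
  ext (_ | ⟨a, t⟩)
  · simp [NFA.accepts_eq_acceptsFrom_start]
  · rw [NFA.accepts_eq_acceptsFrom_start, uniqueFirstLetterDFA_start,
      NFA.cons_mem_acceptsFrom_singleton]
    simp [mem_acceptsFrom_uniqueFirstLetterDFA_some]

end UniqueFirstLetterDFA

section TailLettersDFA

/-- `none` is the state before the first letter, `some S` the state after it, where `S` is the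
set of letters read since; the state "`S = univ`" is dead and therefore omitted. -/
abbrev TailLetters (α : Type) [Fintype α] := Option {S : Finset α // S ≠ Finset.univ}

variable {α : Type} [Fintype α]

theorem card_tailLetters [DecidableEq α] :
    Fintype.card (TailLetters α) = 2 ^ Fintype.card α := by
  rw [Fintype.card_option, Fintype.card_subtype_compl, Fintype.card_subtype_eq,
    Fintype.card_finset]
  have := Nat.one_le_two_pow (n := Fintype.card α)
  omega

variable (α) [DecidableEq α]

@[simps]
def tailLettersDFA : NFA α (TailLetters α) where
  step
    | none, _ => {p | ∃ h : ∅ ≠ Finset.univ, p = some ⟨∅, h⟩}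
    | some S, a => {p | ∃ h : insert a S.val ≠ Finset.univ, p = some ⟨_, h⟩}
  start := {none}
  accept := Set.univ

theorem tailLettersDFA_deterministic : (tailLettersDFA α).Deterministic := by
  refine ⟨⟨none, rfl⟩, fun q a p hp p' hp' => ?_⟩
  cases q <;> obtain ⟨_, rfl⟩ := hp <;> obtain ⟨_, rfl⟩ := hp' <;> rfl

variable {α}

theorem mem_acceptsFrom_tailLettersDFA_some {S : {S : Finset α // S ≠ Finset.univ}}
    {t : List α} : t ∈ (tailLettersDFA α).acceptsFrom {some S} ↔ ∃ b ∉ S.val, b ∉ t := by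
  induction t generalizing S with
  | nil => simpa [Finset.eq_univ_iff_forall] using S.2
  | cons c t ih =>
    rw [NFA.cons_mem_acceptsFrom_singleton]
    simp only [ne_eq, tailLettersDFA_step, Finset.eq_univ_iff_forall, Finset.mem_insert,
      not_forall, not_or, Set.mem_ofPred_eq, ↓existsAndEq, ih, true_and, exists_prop, List.mem_cons]
    exact ⟨fun ⟨_, b, ⟨hbc, hbS⟩, hbt⟩ => ⟨b, hbS, hbc, hbt⟩,
      fun ⟨b, hbS, hbc, hbt⟩ => ⟨⟨b, hbc, hbS⟩, b, ⟨hbc, hbS⟩, hbt⟩⟩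

theorem accepts_tailLettersDFA [Nonempty α] :
    (tailLettersDFA α).accepts = downClosure (uniqueFirstLetter α) := by
  ext (_ | ⟨a, t⟩)
  · simp [NFA.accepts_eq_acceptsFrom_start, mem_downClosure_uniqueFirstLetter]
  · rw [NFA.accepts_eq_acceptsFrom_start, tailLettersDFA_start,
      NFA.cons_mem_acceptsFrom_singleton]
    simp [mem_acceptsFrom_tailLettersDFA_some, mem_downClosure_uniqueFirstLetter,
      Finset.eq_univ_iff_forall]

end TailLettersDFA

section LowerBounds

variable {α : Type} [Fintype α]

noncomputable def lettersExcept [DecidableEq α] (a : α) : List α := (Finset.univ.erase a).toList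

@[simp]
theorem mem_lettersExcept [DecidableEq α] {a b : α} : b ∈ lettersExcept a ↔ b ≠ a := by
  simp [lettersExcept]

variable [Nonempty α] {σ : Type} [Fintype σ]

theorem card_add_one_le_of_accepts_eq_uniqueFirstLetter (M : NFA α σ)
    (hM : M.accepts = uniqueFirstLetter α) : Fintype.card α + 1 ≤ Fintype.card σ := by
  classical
  obtain ⟨c⟩ := ‹Nonempty α›
  have hfool := M.card_le_of_isFoolingSet (ι := Option α) Option.toList
    (fun i => i.elim (c :: lettersExcept c) lettersExcept) ?_ ?_
  · simpa using hfool
  · rintro (_ | a) <;> simp [hM]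
  · rintro (_ | a) (_ | b) hne
    · exact absurd rfl hne
    · simp [hM]
    · simp [hM]
    · simpa [hM] using Or.inl fun h => hne (congrArg some h)

theorem two_pow_card_le_of_accepts_eq_downClosure (M : NFA α σ) (hdet : M.Deterministic)
    (hM : M.accepts = downClosure (uniqueFirstLetter α)) :
    2 ^ Fintype.card α ≤ Fintype.card σ := by
  classical
  obtain ⟨c⟩ := ‹Nonempty α›
  let u : TailLetters α → List α := fun q => q.elim [] fun S => c :: S.val.toList
  have hL : ∀ x, x ∈ M.accepts ↔ ∃ b, b ∉ x.tail := fun x => by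
    rw [hM, mem_downClosure_uniqueFirstLetter]
  have hlive : ∀ q, u q ∈ M.accepts := by
    rintro (_ | S)
    · simp [u, hL]
    · simpa [u, hL, Finset.eq_univ_iff_forall] using S.2
  have hsome : ∀ (S : {S : Finset α // S ≠ Finset.univ}) v,
      u (some S) ++ v ∈ M.accepts ↔ ∃ b ∉ S.val, b ∉ v := fun S v => by
    simp [u, hL]
  rw [← card_tailLetters]
  refine hdet.card_le_of_pairwise_distinguishable u (fun q => ?_) ?_
  · obtain ⟨s, -, hs⟩ := hlive q
    exact ⟨s, hs⟩
  · rintro (_ | S) (_ | T) hne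
    · exact absurd rfl hne
    · exact ⟨c :: lettersExcept c, by simp [u, hL]⟩
    · exact ⟨c :: lettersExcept c, by simp [u, hL]⟩
    · obtain ⟨b, hb⟩ : ∃ b, ¬(b ∈ S.val ↔ b ∈ T.val) := by
        by_contra! h
        exact hne (congrArg some (Subtype.ext (Finset.ext h)))
      exact ⟨lettersExcept b, by simpa [hsome, not_iff_not] using hb⟩

end LowerBounds

section StateComplexityOfUniqueFirstLetter

variable {α : Type} [Fintype α] [Nonempty α]

theorem nN_uniqueFirstLetter : nN (uniqueFirstLetter α) = Fintype.card α + 1 := by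
  rw [← Fintype.card_option]
  exact nN_eq _ accepts_uniqueFirstLetterDFA fun _ _ N hN =>
    Fintype.card_option.trans_le (card_add_one_le_of_accepts_eq_uniqueFirstLetter N hN)

theorem nD_uniqueFirstLetter : nD (uniqueFirstLetter α) = Fintype.card α + 1 := by
  rw [← Fintype.card_option]
  exact nD_eq _ (uniqueFirstLetterDFA_deterministic α) accepts_uniqueFirstLetterDFA
    fun _ _ N _ hN =>
      Fintype.card_option.trans_le (card_add_one_le_of_accepts_eq_uniqueFirstLetter N hN)

theorem nD_downClosure_uniqueFirstLetter :
    nD (downClosure (uniqueFirstLetter α)) = 2 ^ Fintype.card α := by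
  classical
  rw [← card_tailLetters]
  exact nD_eq _ (tailLettersDFA_deterministic α) accepts_tailLettersDFA fun _ _ N hdet hN =>
    card_tailLetters.trans_le (two_pow_card_le_of_accepts_eq_downClosure N hdet hN)

end StateComplexityOfUniqueFirstLetter

/-- Tightness of the downward-closure bound: over `Σ_k = Fin k` (`k ≥ 1`), the
language `D_k` of nonempty words whose first letter does not reappear satisfies
`nN(D_k) = nD(D_k) = k + 1` and `nD(↓D_k) = 2^k`. -/
theorem downClosure_bound_tight (k : ℕ) (hk : 1 ≤ k) (D : Language (Fin k))
    (hD : D = {x | ∃ (a : Fin k) (w : List (Fin k)), x = a :: w ∧ a ∉ w}) :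
    nN D = k + 1 ∧ nD D = k + 1 ∧ nD (downClosure D) = 2 ^ k := by
  have : Nonempty (Fin k) := ⟨⟨0, hk⟩⟩
  obtain rfl : D = uniqueFirstLetter (Fin k) := hD
  simp only [nN_uniqueFirstLetter, nD_uniqueFirstLetter, nD_downClosure_uniqueFirstLetter,
    Fintype.card_fin, and_self]
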